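/- Let (G,X) be a G-system and F = (F_n)_{n∈D} a Følner net in G. Suppose X is S-generic, i.e., there exists x ∈ X with C_F(x) = X, and suppose (G,X) is not minimal. Then (G,X) is point transitive, and there exists ε > 0 such that for every x̂ ∈ X the set S_ε(x̂) = {y ∈ X : there is a sequence (t_n) in G with liminf_n d(t_n x̂, t_n y) ≥ ε} is dense in X. -/
import Mathlib


open Filter Metric Set

section Defs

variable {G : Type*} [Group G] [DecidableEq G]
variable {D : Type*} [Preorder D]

/-- `F` is a (left) Følner net in `G`. -/
def IsFolnerNet (F : D → Finset G) : Prop :=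
  (∀ n, (F n).Nonempty) ∧
    ∀ g : G,
      Tendsto (fun n : D =>
          ((symmDiff ((F n).image fun h => g * h) (F n)).card : ℝ) / (F n).card)
        atTop (nhds 0)

/-- Upper density of `A ⊆ G` relative to the net `F`. -/
noncomputable def upperDensity (F : D → Finset G) (A : Set G) : ℝ :=
  sSup {α : ℝ | ∀ m : D, ∃ n : D, m ≤ n ∧
    α ≤ (((F n : Set G) ∩ A).ncard : ℝ) / (F n).card}

variable {X : Type*} [MetricSpace X] [MulAction G X]

/-- The minimal `F`-center of attraction of `x`. -/
def minCenter (F : D → Finset G) (x : X) : Set X :=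
  {y : X | ∀ U : Set X, IsOpen U → y ∈ U → 0 < upperDensity F {g : G | g • x ∈ U}}

end Defs

section Aux

variable {G : Type*} [Group G] [DecidableEq G]
variable {D : Type*} [Preorder D]

lemma exists_pos_of_upperDensity_pos {F : D → Finset G} {A : Set G}
    (h : 0 < upperDensity F A) :
    ∃ α : ℝ, 0 < α ∧ ∀ m : D, ∃ n : D, m ≤ n ∧
      α ≤ (((F n : Set G) ∩ A).ncard : ℝ) / (F n).card := by
  by_contra hc
  push_neg at hc
  have hle : upperDensity F A ≤ 0 := by
    apply Real.sSup_le _ le_rfl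
    intro α hα
    by_contra hα0
    push_neg at hα0
    obtain ⟨m, hm⟩ := hc α hα0
    obtain ⟨n, hn, hle⟩ := hα m
    exact absurd hle (not_le.mpr (hm n hn))
  linarith

lemma nonempty_of_upperDensity_pos [Nonempty D] {F : D → Finset G} {A : Set G}
    (h : 0 < upperDensity F A) : A.Nonempty := by
  obtain ⟨α, hα, hP⟩ := exists_pos_of_upperDensity_pos h
  obtain ⟨n, -, hle⟩ := hP (Classical.arbitrary D)
  by_contra hA
  rw [Set.not_nonempty_iff_eq_empty] at hA
  rw [hA, Set.inter_empty] at hle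
  simp at hle
  linarith

lemma syndetic_of_upperDensity_pos [Nonempty D] [IsDirected D (· ≤ ·)]
    {Fol : D → Finset G} (hFol : IsFolnerNet Fol) {A : Set G}
    (hA : 0 < upperDensity Fol A) :
    ∃ S : Finset G, ∀ g : G, ∃ s ∈ S, ∃ a ∈ A, ∃ b ∈ A, s⁻¹ * g = a * b⁻¹ := by
  classical
  by_contra hns
  push_neg at hns
  obtain ⟨α, hαpos, hα⟩ := exists_pos_of_upperDensity_pos hA
  set f : Finset G → G := fun s => (hns s).choose with hf
  have hfspec : ∀ s : Finset G, ∀ t ∈ s, ∀ a ∈ A, ∀ b ∈ A, t⁻¹ * (f s) ≠ a * b⁻¹ :=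
    fun s => (hns s).choose_spec
  set SS : ℕ → Finset G := fun n => Nat.rec ∅ (fun _ prev => insert (f prev) prev) n with hSS
  set u : ℕ → G := fun n => f (SS n) with hu
  have hSSsucc : ∀ n, SS (n + 1) = insert (u n) (SS n) := fun n => rfl
  have hmem : ∀ i j, i < j → u i ∈ SS j := by
    intro i j hij
    induction j with
    | zero => omega
    | succ j ih =>
      rw [hSSsucc]
      rcases Nat.lt_succ_iff_lt_or_eq.mp hij with h | h
      · exact Finset.mem_insert_of_mem (ih h)
      · subst h; exact Finset.mem_insert_self _ _
  have hsep : ∀ i j, i < j → ∀ a ∈ A, ∀ b ∈ A, (u i)⁻¹ * u j ≠ a * b⁻¹ :=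
    fun i j hij => hfspec (SS j) (u i) (hmem i j hij)
  set K : ℕ := ⌈(2 : ℝ) / α⌉₊ + 1 with hK
  have hev : ∀ᶠ n in (atTop : Filter D), ∀ i ∈ Finset.range K,
      ((symmDiff ((Fol n).image fun h => u i * h) (Fol n)).card : ℝ) / (Fol n).card < α / 2 := by
    rw [Filter.eventually_all_finset]
    intro i _
    exact (hFol.2 (u i)).eventually_lt_const (by linarith)
  obtain ⟨m₀, hm₀⟩ := eventually_atTop.mp hev
  obtain ⟨n, hn, hdens⟩ := hα m₀
  have hcpos : (0 : ℝ) < ((Fol n).card : ℝ) := by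
    exact_mod_cast Finset.card_pos.mpr (hFol.1 n)
  set c : ℝ := ((Fol n).card : ℝ) with hc
  set E : Finset G := (Fol n).filter (fun g => g ∈ A) with hE
  have hEcoe : ((Fol n : Set G) ∩ A) = (E : Set G) := by
    rw [hE]; ext g; simp [Finset.mem_filter]
  have hEcard : α * c ≤ (E.card : ℝ) := by
    rw [hEcoe, Set.ncard_coe_finset] at hdens
    calc α * c ≤ ((E.card : ℝ) / c) * c := mul_le_mul_of_nonneg_right hdens hcpos.le
      _ = (E.card : ℝ) := by field_simp
  set Dd : ℕ → Finset G := fun i => (Fol n).filter (fun h => (u i)⁻¹ * h ∈ A) with hDd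
  have hDcard : ∀ i ∈ Finset.range K, (E.card : ℝ) ≤ ((Dd i).card : ℝ) + (α / 2) * c := by
    intro i hi
    have hΔ : ((symmDiff ((Fol n).image fun h => u i * h) (Fol n)).card : ℝ) < (α / 2) * c := by
      have h1 := hm₀ n hn i hi
      rwa [div_lt_iff₀ hcpos] at h1
    have hnat : E.card ≤ (Dd i).card +
        (symmDiff ((Fol n).image fun h => u i * h) (Fol n)).card := by
      set Δ := symmDiff ((Fol n).image fun h => u i * h) (Fol n) with hΔdef
      have himg : ((E.image fun h => u i * h)).card = E.card :=
        Finset.card_image_of_injective _ (mul_right_injective (u i))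
      have hsub : (E.image fun h => u i * h) \ Δ ⊆ Dd i := by
        intro t ht
        rw [Finset.mem_sdiff] at ht
        obtain ⟨htim, htΔ⟩ := ht
        rw [Finset.mem_image] at htim
        obtain ⟨e, he, rfl⟩ := htim
        rw [hE, Finset.mem_filter] at he
        have hmemim : u i * e ∈ (Fol n).image fun h => u i * h :=
          Finset.mem_image_of_mem _ he.1
        have htF : u i * e ∈ Fol n := by
          by_contra hnotF
          exact htΔ (Finset.mem_symmDiff.mpr (Or.inl ⟨hmemim, hnotF⟩))
        rw [hDd]
        rw [Finset.mem_filter]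
        refine ⟨htF, ?_⟩
        rw [inv_mul_cancel_left]
        exact he.2
      calc E.card = ((E.image fun h => u i * h)).card := himg.symm
        _ ≤ ((E.image fun h => u i * h) \ Δ).card + Δ.card :=
            Finset.card_le_card_sdiff_add_card
        _ ≤ (Dd i).card + Δ.card := by
            exact Nat.add_le_add_right (Finset.card_le_card hsub) _
    calc (E.card : ℝ) ≤ ((Dd i).card : ℝ) +
          ((symmDiff ((Fol n).image fun h => u i * h) (Fol n)).card : ℝ) := by
          exact_mod_cast hnat
      _ ≤ ((Dd i).card : ℝ) + (α / 2) * c := by linarith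
  have hdisj : ∀ i ∈ Finset.range K, ∀ j ∈ Finset.range K, i ≠ j → Disjoint (Dd i) (Dd j) := by
    intro i _ j _ hij
    rw [Finset.disjoint_left]
    intro h hhi hhj
    rw [hDd, Finset.mem_filter] at hhi hhj
    rcases lt_or_gt_of_ne hij with hlt | hgt
    · exact hsep i j hlt _ hhi.2 _ hhj.2 (by group)
    · exact hsep j i hgt _ hhj.2 _ hhi.2 (by group)
  have hsum_le : ∑ i ∈ Finset.range K, ((Dd i).card : ℝ) ≤ c := by
    have hbi : ((Finset.range K).biUnion Dd).card = ∑ i ∈ Finset.range K, (Dd i).card :=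
      Finset.card_biUnion hdisj
    have hsub : (Finset.range K).biUnion Dd ⊆ Fol n :=
      Finset.biUnion_subset.mpr (fun i _ => Finset.filter_subset _ _)
    have h1 : ∑ i ∈ Finset.range K, (Dd i).card ≤ (Fol n).card := by
      rw [← hbi]; exact Finset.card_le_card hsub
    rw [hc]
    exact_mod_cast h1
  have hKα : (2 : ℝ) < (K : ℝ) * α := by
    have h1 : (2 / α : ℝ) < (K : ℝ) := by
      calc (2 / α : ℝ) ≤ (⌈(2 : ℝ) / α⌉₊ : ℝ) := Nat.le_ceil _
        _ < (K : ℝ) := by rw [hK]; exact_mod_cast Nat.lt_succ_self _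
    calc (2 : ℝ) = (2 / α) * α := by field_simp
      _ < (K : ℝ) * α := mul_lt_mul_of_pos_right h1 hαpos
  have hsum_ge : c < ∑ i ∈ Finset.range K, ((Dd i).card : ℝ) := by
    have hlow : ∀ i ∈ Finset.range K, (α / 2) * c ≤ ((Dd i).card : ℝ) := by
      intro i hi
      have h1 := hDcard i hi
      linarith
    have h2 : ∑ i ∈ Finset.range K, ((α / 2) * c) ≤ ∑ i ∈ Finset.range K, ((Dd i).card : ℝ) :=
      Finset.sum_le_sum hlow
    have h3 : ∑ i ∈ Finset.range K, ((α / 2) * c) = (K : ℝ) * ((α / 2) * c) := by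
      rw [Finset.sum_const, Finset.card_range, nsmul_eq_mul]
    have h4 : c < (K : ℝ) * ((α / 2) * c) := by nlinarith
    linarith
  linarith

end Aux

/-- Theorem 1.4: if `X` is S-generic and not minimal, then `(G, X)` is point transitive and,
for some `ε > 0`, for every `x̂ ∈ X` the set `S_ε(x̂)` is dense in `X`. -/
theorem auslanderYorke_of_Sgeneric_univ
    {G : Type*} [Group G] [Infinite G] [DecidableEq G]
    {D : Type*} [Preorder D] [IsDirected D (· ≤ ·)] [Nonempty D]
    {X : Type*} [MetricSpace X] [CompactSpace X] [MulAction G X]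
    (hcont : ∀ g : G, Continuous fun y : X => g • y)
    (Fol : D → Finset G) (hFol : IsFolnerNet Fol)
    (hS : ∃ x : X, minCenter Fol x = Set.univ)
    (hnotmin : ¬ ∀ y : X, Dense (MulAction.orbit G y)) :
    (∃ y : X, Dense (MulAction.orbit G y)) ∧
    ∃ ε : ℝ, 0 < ε ∧ ∀ xhat : X,
      Dense {y : X |
        ∃ t : ℕ → G, ε ≤ Filter.liminf (fun n => dist ((t n) • xhat) ((t n) • y)) atTop} := by
  classical
  obtain ⟨x, hx⟩ := hS
  have hxmc : ∀ y : X, y ∈ minCenter Fol x := by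
    intro y; rw [hx]; trivial
  have hdense : Dense (MulAction.orbit G x) := by
    intro y
    rw [_root_.mem_closure_iff]
    intro U hU hyU
    have h0 := hxmc y U hU hyU
    obtain ⟨g, hg⟩ := nonempty_of_upperDensity_pos h0
    exact ⟨g • x, hg, MulAction.mem_orbit _ _⟩
  refine ⟨⟨x, hdense⟩, ?_⟩
  by_contra hc
  push_neg at hc
  have hW : ∀ ε : ℝ, 0 < ε → ∃ W : Set X, IsOpen W ∧ x ∈ W ∧
      ∀ p ∈ W, ∀ q ∈ W, ∀ g : G, dist (g • p) (g • q) < 2 * ε := by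
    intro ε hε
    obtain ⟨xhat, hnd⟩ := hc ε hε
    rw [dense_iff_inter_open] at hnd
    push_neg at hnd
    obtain ⟨U, hUopen, hUne, hUS⟩ := hnd
    have hpair : ∀ y ∈ U, ∀ g : G, dist (g • xhat) (g • y) < ε := by
      intro y hy g
      by_contra hge
      push_neg at hge
      refine Set.eq_empty_iff_forall_notMem.mp hUS y ⟨hy, ⟨fun _ => g, ?_⟩⟩
      rw [Filter.liminf_const]
      exact hge
    obtain ⟨p, hporb, hpU⟩ := hdense.exists_mem_open hUopen hUne
    obtain ⟨h, rfl⟩ := MulAction.mem_orbit_iff.mp hporb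
    refine ⟨(fun p => h • p) ⁻¹' U, hUopen.preimage (hcont h), hpU, ?_⟩
    intro p hp q hq g
    have h1 := hpair (h • p) hp (g * h⁻¹)
    have h2 := hpair (h • q) hq (g * h⁻¹)
    have e1 : (g * h⁻¹) • (h • p) = g • p := by rw [smul_smul, inv_mul_cancel_right]
    have e2 : (g * h⁻¹) • (h • q) = g • q := by rw [smul_smul, inv_mul_cancel_right]
    rw [e1] at h1; rw [e2] at h2
    calc dist (g • p) (g • q)
        ≤ dist (g • p) ((g * h⁻¹) • xhat) + dist ((g * h⁻¹) • xhat) (g • q) :=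
          dist_triangle _ _ _
      _ < ε + ε := by
          rw [dist_comm (g • p)]
          exact add_lt_add h1 h2
      _ = 2 * ε := by ring
  have hsynd : ∀ δ : ℝ, 0 < δ → ∃ S : Finset G, ∀ g : G, ∃ s ∈ S,
      dist ((s⁻¹ * g) • x) x < δ := by
    intro δ hδ
    obtain ⟨W, hWopen, hxW, hWstab⟩ := hW (δ / 8) (by linarith)
    have hW'open : IsOpen (W ∩ ball x (δ / 4)) := hWopen.inter isOpen_ball
    have hxW' : x ∈ W ∩ ball x (δ / 4) := ⟨hxW, mem_ball_self (by linarith)⟩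
    have hA : 0 < upperDensity Fol {g : G | g • x ∈ W ∩ ball x (δ / 4)} :=
      hxmc x (W ∩ ball x (δ / 4)) hW'open hxW'
    obtain ⟨S, hSp⟩ := syndetic_of_upperDensity_pos hFol hA
    refine ⟨S, fun g => ?_⟩
    obtain ⟨s, hsS, a, ha, b, hb, heq⟩ := hSp g
    refine ⟨s, hsS, ?_⟩
    rw [heq]
    have ha' : a • x ∈ W ∩ ball x (δ / 4) := ha
    have hb' : b • x ∈ W ∩ ball x (δ / 4) := hb
    have e3 : (a * b⁻¹) • (b • x) = a • x := by rw [smul_smul, inv_mul_cancel_right]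
    have h1 : dist ((a * b⁻¹) • x) ((a * b⁻¹) • (b • x)) < 2 * (δ / 8) :=
      hWstab x hxW'.1 (b • x) hb'.1 (a * b⁻¹)
    have h1' : dist ((a * b⁻¹) • x) (a • x) < δ / 4 := by
      rw [← e3]
      linarith
    have h2 : dist (a • x) x < δ / 4 := by
      have := ha'.2
      rwa [mem_ball] at this
    calc dist ((a * b⁻¹) • x) x ≤ dist ((a * b⁻¹) • x) (a • x) + dist (a • x) x :=
          dist_triangle _ _ _
      _ < δ / 4 + δ / 4 := add_lt_add h1' h2
      _ ≤ δ := by linarith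
  have hmin : ∀ y : X, Dense (MulAction.orbit G y) := by
    intro y
    have hxcl : x ∈ closure (MulAction.orbit G y) := by
      rw [Metric.mem_closure_iff]
      intro r hr
      obtain ⟨S, hSp⟩ := hsynd (r / 2) (by linarith)
      have hSne : S.Nonempty := by
        obtain ⟨s, hs, -⟩ := hSp 1
        exact ⟨s, hs⟩
      have hmod : ∀ s : G, ∃ ρ : ℝ, 0 < ρ ∧ ∀ z : X, dist z y < ρ →
          dist (s⁻¹ • z) (s⁻¹ • y) < r / 2 := by
        intro s
        obtain ⟨ρ, hρ, hρ'⟩ := Metric.continuous_iff.mp (hcont s⁻¹) y (r / 2) (by linarith)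
        exact ⟨ρ, hρ, hρ'⟩
      choose ρ hρpos hρ using hmod
      have hSneB : (ball y (S.inf' hSne ρ)).Nonempty := by
        refine ⟨y, mem_ball_self ?_⟩
        rw [Finset.lt_inf'_iff]
        intro s _
        exact hρpos s
      obtain ⟨p, hporb, hpB⟩ := hdense.exists_mem_open isOpen_ball hSneB
      obtain ⟨h, rfl⟩ := MulAction.mem_orbit_iff.mp hporb
      obtain ⟨s, hsS, hsx⟩ := hSp h
      have hd1 : dist (s⁻¹ • (h • x)) (s⁻¹ • y) < r / 2 := by
        apply hρ s
        have hball : dist (h • x) y < S.inf' hSne ρ := by rwa [mem_ball] at hpB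
        exact lt_of_lt_of_le hball (Finset.inf'_le ρ hsS)
      rw [smul_smul] at hd1
      refine ⟨s⁻¹ • y, MulAction.mem_orbit _ _, ?_⟩
      calc dist x (s⁻¹ • y)
          ≤ dist x ((s⁻¹ * h) • x) + dist ((s⁻¹ * h) • x) (s⁻¹ • y) := dist_triangle _ _ _
        _ < r / 2 + r / 2 := add_lt_add (by rw [dist_comm]; exact hsx) hd1
        _ = r := by ring
    have horb : MulAction.orbit G x ⊆ closure (MulAction.orbit G y) := by
      rintro _ ⟨g, rfl⟩
      have h1 : (fun z : X => g • z) '' closure (MulAction.orbit G y) ⊆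
          closure ((fun z : X => g • z) '' MulAction.orbit G y) :=
        image_closure_subset_closure_image (hcont g)
      have h2 : (fun z : X => g • z) '' MulAction.orbit G y ⊆ MulAction.orbit G y := by
        rintro _ ⟨_, ⟨h', rfl⟩, rfl⟩
        exact MulAction.mem_orbit_iff.mpr ⟨g * h', (mul_smul g h' y)⟩
      have hmemim : g • x ∈ (fun z : X => g • z) '' closure (MulAction.orbit G y) :=
        ⟨x, hxcl, rfl⟩
      exact closure_mono h2 (h1 hmemim)
    rw [dense_iff_closure_eq]
    apply Set.eq_univ_of_univ_subset
    calc (Set.univ : Set X) = closure (MulAction.orbit G x) := hdense.closure_eq.symm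
      _ ⊆ closure (closure (MulAction.orbit G y)) := closure_mono horb
      _ = closure (MulAction.orbit G y) := closure_closure
  exact hnotmin hmin
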